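/- arXiv:1201.3127 — 3 statements merged into one kernel-verified Lean document; each statement's English description precedes it below -/
import Mathlib

section
/- The tensor product of the Stanley–Reisner face rings of two simplicial complexes K and L over a commutative ring R is isomorphic as an R-algebra to the Stanley–Reisner face ring of the join K * L. -/
/-- The Stanley–Reisner ideal of a set `K` of finsets of vertices: generated by
the monomials whose vertex sets are not faces of `K`. -/
noncomputable def srIdeal (R : Type*) [CommRing R] {V : Type*} (K : Set (Finset V)) :
    Ideal (MvPolynomial V R) :=
  Ideal.span {p | ∃ s : Finset V, s ∉ K ∧ p = ∏ v ∈ s, MvPolynomial.X v}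

/-- The Stanley–Reisner face ring of `K` over `R`. -/
def faceRing (R : Type*) [CommRing R] {V : Type*} (K : Set (Finset V)) :=
  MvPolynomial V R ⧸ srIdeal R K

noncomputable instance (R : Type*) [CommRing R] {V : Type*} (K : Set (Finset V)) :
    CommRing (faceRing R K) := Ideal.Quotient.commRing _

noncomputable instance (R : Type*) [CommRing R] {V : Type*} (K : Set (Finset V)) :
    Algebra R (faceRing R K) := Ideal.Quotient.algebra R

/-- The join of complexes `K` (on `V`) and `L` (on `W`), as a complex on `V ⊕ W`. -/
def joinComplex {V W : Type*} [DecidableEq V] [DecidableEq W]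
    (K : Set (Finset V)) (L : Set (Finset W)) : Set (Finset (V ⊕ W)) :=
  {s | ∃ σ ∈ K, ∃ τ ∈ L,
    s = σ.map ⟨Sum.inl, Sum.inl_injective⟩ ∪ τ.map ⟨Sum.inr, Sum.inr_injective⟩}

namespace FRJ

open MvPolynomial

variable {V W : Type*} [DecidableEq V] [DecidableEq W]

noncomputable def sV (s : Finset (V ⊕ W)) : Finset V :=
  s.preimage Sum.inl Sum.inl_injective.injOn

noncomputable def sW (s : Finset (V ⊕ W)) : Finset W :=
  s.preimage Sum.inr Sum.inr_injective.injOn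

lemma decomp (s : Finset (V ⊕ W)) :
    s = (sV s).map ⟨Sum.inl, Sum.inl_injective⟩ ∪ (sW s).map ⟨Sum.inr, Sum.inr_injective⟩ := by
  ext u; cases u <;> simp [sV, sW]

lemma sV_eq (σ : Finset V) (τ : Finset W) :
    sV (σ.map ⟨Sum.inl, Sum.inl_injective⟩ ∪ τ.map ⟨Sum.inr, Sum.inr_injective⟩) = σ := by
  ext v; simp [sV]

lemma sW_eq (σ : Finset V) (τ : Finset W) :
    sW (σ.map ⟨Sum.inl, Sum.inl_injective⟩ ∪ τ.map ⟨Sum.inr, Sum.inr_injective⟩) = τ := by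
  ext w; simp [sW]

lemma mem_join {K : Set (Finset V)} {L : Set (Finset W)} {s : Finset (V ⊕ W)} :
    s ∈ joinComplex K L ↔ sV s ∈ K ∧ sW s ∈ L := by
  constructor
  · rintro ⟨σ, hσ, τ, hτ, rfl⟩
    rw [sV_eq, sW_eq]; exact ⟨hσ, hτ⟩
  · rintro ⟨h1, h2⟩; exact ⟨_, h1, _, h2, decomp s⟩

lemma prod_mem_srIdeal (R : Type*) [CommRing R] {V : Type*} {K : Set (Finset V)}
    {s : Finset V} (hs : s ∉ K) :
    (∏ v ∈ s, X v : MvPolynomial V R) ∈ srIdeal R K :=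
  Ideal.subset_span ⟨s, hs, rfl⟩

variable (R : Type*) [CommRing R] (K : Set (Finset V)) (L : Set (Finset W))

/-- The left map into the face ring of the join. -/
noncomputable def φ₁ : faceRing R K →ₐ[R] faceRing R (joinComplex K L) :=
  Ideal.Quotient.liftₐ _
    ((Ideal.Quotient.mkₐ R (srIdeal R (joinComplex K L))).comp (rename Sum.inl)) (by
      intro a ha
      refine RingHom.mem_ker.mp (Ideal.span_le.mpr ?_ ha : a ∈ RingHom.ker _)
      rintro p ⟨s, hs, rfl⟩
      have h1 : (rename Sum.inl) (∏ v ∈ s, (X v : MvPolynomial V R)) =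
          ∏ u ∈ s.map ⟨Sum.inl, Sum.inl_injective⟩, (X u : MvPolynomial (V ⊕ W) R) := by
        rw [Finset.prod_map, map_prod]; simp
      have h2 : s.map ⟨Sum.inl, Sum.inl_injective⟩ ∉ joinComplex K L := by
        intro h
        rw [mem_join] at h
        have : sV (s.map ⟨Sum.inl, Sum.inl_injective⟩ : Finset (V ⊕ W)) = s := by ext v; simp [sV]
        exact hs (this ▸ h.1)
      show Ideal.Quotient.mk _ ((rename Sum.inl) _) = 0
      rw [h1]; refine Ideal.Quotient.eq_zero_iff_mem.mpr ?_
      exact prod_mem_srIdeal R h2)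

noncomputable def φ₂ : faceRing R L →ₐ[R] faceRing R (joinComplex K L) :=
  Ideal.Quotient.liftₐ _
    ((Ideal.Quotient.mkₐ R (srIdeal R (joinComplex K L))).comp (rename Sum.inr)) (by
      intro a ha
      refine RingHom.mem_ker.mp (Ideal.span_le.mpr ?_ ha : a ∈ RingHom.ker _)
      rintro p ⟨s, hs, rfl⟩
      have h1 : (rename Sum.inr) (∏ v ∈ s, (X v : MvPolynomial W R)) =
          ∏ u ∈ s.map ⟨Sum.inr, Sum.inr_injective⟩, (X u : MvPolynomial (V ⊕ W) R) := by
        rw [Finset.prod_map, map_prod]; simp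
      have h2 : s.map ⟨Sum.inr, Sum.inr_injective⟩ ∉ joinComplex K L := by
        intro h
        rw [mem_join] at h
        have : sW (s.map ⟨Sum.inr, Sum.inr_injective⟩ : Finset (V ⊕ W)) = s := by ext v; simp [sW]
        exact hs (this ▸ h.2)
      show Ideal.Quotient.mk _ ((rename Sum.inr) _) = 0
      rw [h1]; refine Ideal.Quotient.eq_zero_iff_mem.mpr ?_
      exact prod_mem_srIdeal R h2)

noncomputable def φ : TensorProduct R (faceRing R K) (faceRing R L) →ₐ[R]
    faceRing R (joinComplex K L) :=
  Algebra.TensorProduct.productMap (φ₁ R K L) (φ₂ R K L)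

noncomputable def inL : faceRing R K →ₐ[R] TensorProduct R (faceRing R K) (faceRing R L) :=
  Algebra.TensorProduct.includeLeft

noncomputable def inR : faceRing R L →ₐ[R] TensorProduct R (faceRing R K) (faceRing R L) :=
  Algebra.TensorProduct.includeRight

/-- The auxiliary map from the big polynomial ring into the tensor product. -/
noncomputable def h : MvPolynomial (V ⊕ W) R →ₐ[R]
    TensorProduct R (faceRing R K) (faceRing R L) :=
  aeval (Sum.elim
    (fun v => inL R K L (Ideal.Quotient.mk (srIdeal R K) (X v)))
    (fun w => inR R K L (Ideal.Quotient.mk (srIdeal R L) (X w))))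

noncomputable def ψ : faceRing R (joinComplex K L) →ₐ[R]
    TensorProduct R (faceRing R K) (faceRing R L) :=
  Ideal.Quotient.liftₐ _ (h R K L) (by
    intro a ha
    refine RingHom.mem_ker.mp (Ideal.span_le.mpr ?_ ha : a ∈ RingHom.ker _)
    rintro p ⟨s, hs, rfl⟩
    show h R K L (∏ u ∈ s, X u) = 0
    have hdisj : Disjoint (Finset.map ⟨Sum.inl, Sum.inl_injective⟩ (sV s))
        (Finset.map ⟨Sum.inr, Sum.inr_injective⟩ (sW s)) := by
      simp [Finset.disjoint_left]
    rw [map_prod]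
    conv_lhs => rw [decomp s]
    rw [Finset.prod_union hdisj, Finset.prod_map, Finset.prod_map]
    have e1 : ∀ v : V, (h R K L) (X (Sum.inl v : V ⊕ W)) =
        inL R K L (Ideal.Quotient.mk (srIdeal R K) (X v)) := by
      intro v; simp [h]
    have e2 : ∀ w : W, (h R K L) (X (Sum.inr w : V ⊕ W)) =
        inR R K L (Ideal.Quotient.mk (srIdeal R L) (X w)) := by
      intro w; simp [h]
    simp only [Function.Embedding.coeFn_mk, e1, e2, ← map_prod]
    rw [mem_join, not_and_or] at hs
    rcases hs with hs | hs
    · have : @Eq (faceRing R K) (∏ v ∈ sV s, Ideal.Quotient.mk (srIdeal R K) (X v)) 0 :=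
        (map_prod (Ideal.Quotient.mk (srIdeal R K)) _ _).symm.trans
          (Ideal.Quotient.eq_zero_iff_mem.mpr (prod_mem_srIdeal R hs))
      exact mul_eq_zero_of_left ((map_prod (inL R K L) _ _).symm.trans (by rw [this, map_zero])) _
    · have : @Eq (faceRing R L) (∏ w ∈ sW s, Ideal.Quotient.mk (srIdeal R L) (X w)) 0 :=
        (map_prod (Ideal.Quotient.mk (srIdeal R L)) _ _).symm.trans
          (Ideal.Quotient.eq_zero_iff_mem.mpr (prod_mem_srIdeal R hs))
      exact mul_eq_zero_of_right _ ((map_prod (inR R K L) _ _).symm.trans (by rw [this, map_zero])))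


lemma liftₐ_mk {A B : Type*} [CommRing A] [CommRing B] [Algebra R A] [Algebra R B]
    (I : Ideal A) (f : A →ₐ[R] B) (hf : ∀ a ∈ I, f a = 0) (x : A) :
    Ideal.Quotient.liftₐ I f hf (Ideal.Quotient.mk I x) = f x := by
  rw [Ideal.Quotient.liftₐ_apply]; exact Ideal.Quotient.lift_mk _ _ _

lemma phi1_mk (v : V) : φ₁ R K L (Ideal.Quotient.mk (srIdeal R K) (X v)) =
    Ideal.Quotient.mk (srIdeal R (joinComplex K L)) (X (Sum.inl v)) := by
  show (Ideal.Quotient.mkₐ R (srIdeal R (joinComplex K L))) ((rename Sum.inl) (X v)) = _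
  simp

lemma phi2_mk (w : W) : φ₂ R K L (Ideal.Quotient.mk (srIdeal R L) (X w)) =
    Ideal.Quotient.mk (srIdeal R (joinComplex K L)) (X (Sum.inr w)) := by
  show (Ideal.Quotient.mkₐ R (srIdeal R (joinComplex K L))) ((rename Sum.inr) (X w)) = _
  simp

lemma psi_mk (p : MvPolynomial (V ⊕ W) R) :
    ψ R K L (Ideal.Quotient.mk (srIdeal R (joinComplex K L)) p) = h R K L p := rfl

lemma phi_h (u : V ⊕ W) :
    (φ R K L) ((h R K L) (X u)) = Ideal.Quotient.mk (srIdeal R (joinComplex K L)) (X u) := by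
  cases u with
  | inl v =>
    simp only [h, aeval_X, Sum.elim_inl, inL, Algebra.TensorProduct.includeLeft_apply, φ,
      Algebra.TensorProduct.productMap_left_apply, phi1_mk]
    exact (Algebra.TensorProduct.productMap_left_apply _ _ _).trans (phi1_mk R K L v)
  | inr w =>
    simp only [h, aeval_X, Sum.elim_inr, inR, Algebra.TensorProduct.includeRight_apply, φ,
      Algebra.TensorProduct.productMap_right_apply, phi2_mk]
    exact (Algebra.TensorProduct.productMap_right_apply _ _ _).trans (phi2_mk R K L w)

lemma comp1 : (φ R K L).comp (ψ R K L) = AlgHom.id R (faceRing R (joinComplex K L)) := by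
  apply Ideal.Quotient.algHom_ext
  apply MvPolynomial.algHom_ext
  intro u
  show (φ R K L) ((h R K L) (X u)) =
    (Ideal.Quotient.mk (srIdeal R (joinComplex K L))) (X u)
  exact phi_h R K L u

lemma comp2 : (ψ R K L).comp (φ R K L) =
    AlgHom.id R (TensorProduct R (faceRing R K) (faceRing R L)) := by
  apply Algebra.TensorProduct.ext
  · apply Ideal.Quotient.algHom_ext
    apply MvPolynomial.algHom_ext
    intro v
    show (ψ R K L) ((φ R K L)
        ((Ideal.Quotient.mk (srIdeal R K)) (X v) ⊗ₜ[R] (1 : faceRing R L))) =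
      (Ideal.Quotient.mk (srIdeal R K)) (X v) ⊗ₜ[R] (1 : faceRing R L)
    refine (congrArg (ψ R K L) ((Algebra.TensorProduct.productMap_left_apply _ _ _).trans
      (phi1_mk R K L v))).trans ?_
    rw [psi_mk R K L (X (Sum.inl v))]
    simp [h, inL]
    rfl
  · apply Ideal.Quotient.algHom_ext
    apply MvPolynomial.algHom_ext
    intro w
    show (ψ R K L) ((φ R K L)
        ((1 : faceRing R K) ⊗ₜ[R] (Ideal.Quotient.mk (srIdeal R L)) (X w))) =
      (1 : faceRing R K) ⊗ₜ[R] (Ideal.Quotient.mk (srIdeal R L)) (X w)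
    refine (congrArg (ψ R K L) ((Algebra.TensorProduct.productMap_right_apply _ _ _).trans
      (phi2_mk R K L w))).trans ?_
    rw [psi_mk R K L (X (Sum.inr w))]
    simp [h, inR]
    rfl

noncomputable def theEquiv : TensorProduct R (faceRing R K) (faceRing R L) ≃ₐ[R]
    faceRing R (joinComplex K L) :=
  AlgEquiv.ofAlgHom (φ R K L) (ψ R K L) (comp1 R K L) (comp2 R K L)

end FRJ

/-- The tensor product of the Stanley–Reisner face rings of two simplicial complexes
`K` and `L` over `R` is isomorphic as an `R`-algebra to the face ring of the join. -/
theorem faceRing_tensor_iso_faceRing_join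
    (R : Type*) [CommRing R] {V W : Type*} [DecidableEq V] [DecidableEq W]
    (K : Set (Finset V)) (L : Set (Finset W))
    (hKe : ∅ ∈ K) (hLe : ∅ ∈ L)
    (hK : ∀ s ∈ K, ∀ t ⊆ s, t ∈ K) (hL : ∀ s ∈ L, ∀ t ⊆ s, t ∈ L) :
    Nonempty ((TensorProduct R (faceRing R K) (faceRing R L)) ≃ₐ[R]
      faceRing R (joinComplex K L)) := by
  exact ⟨FRJ.theEquiv R K L⟩
end

section
/- The comultiplication Δ on NSym defined by Δ(Z(t)) = res_{u=0} Z(u) ⊗ (u − Z(t))^{-1} is coassociative. -/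
/-!
Write `P k s` for the coefficient of `t ^ (k + 1 + s)` in `Z(t) ^ (k + 1)`, so that
`Δ Z_n = ∑_{a + b = n} Z_a ⊗ P a b`. Since `Δ` is multiplicative, the factorisations
`Z(t) ^ (k + 2) = Z(t) · Z(t) ^ (k + 1)` and `Z(t) ^ (i + j + 2) = Z(t) ^ (i + 1) · Z(t) ^ (j + 1)`
give, by induction on `k`, `Δ (P k s) = ∑_{a + b = s} P k a ⊗ P (k + a) b`; the case `k = 0` is the
formula for `Δ Z_s`. Hence `(Δ ⊗ id) Δ Z_n` and `(id ⊗ Δ) Δ Z_n` both equal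
`∑_{a + b + c = n} Z_a ⊗ P a b ⊗ P (a + b) c`, and algebra maps out of the free algebra `NSym` are
determined by their values on the generators.
-/

open scoped TensorProduct

/-- `NSym = ℤ⟨Z_1, Z_2, …⟩`, the free associative ring on generators `Z_i`, `i ≥ 1`. -/
abbrev NSym := FreeAlgebra ℤ {n : ℕ // 0 < n}

instance : Module ℤ NSym := Algebra.toModule

/-- `Z_n` for `n : ℕ`, with the convention `Z_0 = 1`. -/
noncomputable def Zc (n : ℕ) : NSym :=
  if h : 0 < n then FreeAlgebra.ι ℤ ⟨n, h⟩ else 1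

/-- The coefficient of `t^(m+1)` in `res_{u=0} Z(u) ⊗ (u - Z(t))⁻¹`:
`Σ_{k≤m} Z_k ⊗ Σ_{m_0+⋯+m_k = m-k} Z_{m_0} ⋯ Z_{m_k}`. -/
noncomputable def deltaZ (m : ℕ) : NSym ⊗[ℤ] NSym :=
  ∑ k ∈ Finset.range (m + 1),
    Zc k ⊗ₜ[ℤ] ∑ f ∈ Finset.Nat.antidiagonalTuple (k + 1) (m - k),
      (List.ofFn fun j => Zc (f j)).prod

/-- The comultiplication `Δ : NSym → NSym ⊗ NSym`, extended to all of `NSym` as a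
ring homomorphism from its values `Δ(Z_m) = deltaZ m` on generators. -/
noncomputable def deltaBFK : NSym →ₐ[ℤ] NSym ⊗[ℤ] NSym :=
  FreeAlgebra.lift ℤ fun n : {n : ℕ // 0 < n} => deltaZ n

open Finset PowerSeries

namespace Finset

variable {A M : Type*} [AddCommMonoid A] [HasAntidiagonal A] [AddCommMonoid M]

theorem sum_antidiagonal_add_assoc (n : A) (f : A → A → A → M) :
    ∑ p ∈ antidiagonal n, ∑ q ∈ antidiagonal p.1, f q.1 q.2 p.2 =
      ∑ p ∈ antidiagonal n, ∑ q ∈ antidiagonal p.2, f p.1 q.1 q.2 := by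
  simp only [sum_sigma']
  apply sum_nbij' (fun ⟨⟨_, j⟩, ⟨k, l⟩⟩ ↦ ⟨(k, l + j), (l, j)⟩)
    (fun ⟨⟨i, _⟩, ⟨k, l⟩⟩ ↦ ⟨(i + k, l), (i, k)⟩) <;> aesop (add simp [add_assoc])

theorem sum_antidiagonal_add_add_add_comm (n : A) (f : A → A → A → A → M) :
    ∑ p ∈ antidiagonal n, ∑ q ∈ antidiagonal p.1, ∑ r ∈ antidiagonal p.2, f q.1 q.2 r.1 r.2 =
      ∑ p ∈ antidiagonal n, ∑ q ∈ antidiagonal p.1, ∑ r ∈ antidiagonal p.2,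
        f q.1 r.1 q.2 r.2 := by
  simp only [← sum_product', sum_sigma']
  apply sum_nbij' (fun ⟨_, ⟨(i, j), (k, l)⟩⟩ ↦ ⟨(i + k, j + l), ((i, k), (j, l))⟩)
    (fun ⟨_, ⟨(i, j), (k, l)⟩⟩ ↦ ⟨(i + k, j + l), ((i, k), (j, l))⟩) <;>
    aesop (add simp [add_add_add_comm])

theorem Nat.sum_antidiagonalTuple_succ (k n : ℕ) (f : (Fin (k + 1) → ℕ) → M) :
    ∑ g ∈ antidiagonalTuple (k + 1) n, f g =
      ∑ p ∈ antidiagonal n, ∑ x ∈ antidiagonalTuple k p.2, f (Fin.cons p.1 x) := by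
  change (List.map f (List.flatMap _ (List.Nat.antidiagonal n))).sum =
    (List.map _ (List.Nat.antidiagonal n)).sum
  simp only [List.flatMap, List.map_flatten, List.sum_flatten, List.map_map, Function.comp_def]
  rfl

end Finset

theorem PowerSeries.coeff_mk_pow {R : Type*} [Semiring R] (f : ℕ → R) (k n : ℕ) :
    coeff n (mk f ^ k) =
      ∑ g ∈ Finset.Nat.antidiagonalTuple k n, (List.ofFn fun j => f (g j)).prod := by
  induction k generalizing n with
  | zero => cases n <;> simp [coeff_one]
  | succ k ih =>
    simp only [pow_succ', coeff_mul, coeff_mk, ih, Finset.Nat.sum_antidiagonalTuple_succ,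
      List.ofFn_succ, Fin.cons_zero, Fin.cons_succ, List.prod_cons, mul_sum]

/-- `Z(t) / t`. -/
noncomputable def zSeries : PowerSeries NSym := mk Zc

/-- The coefficient of `t ^ (k + 1 + s)` in `Z(t) ^ (k + 1)`. -/
noncomputable def zPowCoeff (k s : ℕ) : NSym := coeff s (zSeries ^ (k + 1))

theorem zPowCoeff_zero (s : ℕ) : zPowCoeff 0 s = Zc s := by
  simp [zPowCoeff, zSeries]

theorem zPowCoeff_succ (k s : ℕ) :
    zPowCoeff (k + 1) s = ∑ p ∈ antidiagonal s, Zc p.1 * zPowCoeff k p.2 := by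
  rw [zPowCoeff, pow_succ', coeff_mul]
  simp only [zSeries, coeff_mk, zPowCoeff]

theorem zPowCoeff_add (i j s : ℕ) :
    zPowCoeff (i + j + 1) s = ∑ p ∈ antidiagonal s, zPowCoeff i p.1 * zPowCoeff j p.2 := by
  rw [zPowCoeff, show i + j + 1 + 1 = i + 1 + (j + 1) by omega, pow_add, coeff_mul]
  rfl

theorem deltaBFK_Zc (n : ℕ) :
    deltaBFK (Zc n) = ∑ p ∈ antidiagonal n, Zc p.1 ⊗ₜ[ℤ] zPowCoeff p.1 p.2 := by
  have hdeltaZ : deltaZ n = ∑ p ∈ antidiagonal n, Zc p.1 ⊗ₜ[ℤ] zPowCoeff p.1 p.2 := by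
    rw [deltaZ, Nat.sum_antidiagonal_eq_sum_range_succ_mk]
    simp only [zPowCoeff, zSeries, coeff_mk_pow]
  rcases Nat.eq_zero_or_pos n with rfl | hn
  · simp [Zc, zPowCoeff_zero, Algebra.TensorProduct.one_def]
  · rw [← hdeltaZ, Zc, dif_pos hn, deltaBFK, FreeAlgebra.lift_ι_apply]

theorem deltaBFK_zPowCoeff (k s : ℕ) :
    deltaBFK (zPowCoeff k s) =
      ∑ p ∈ antidiagonal s, zPowCoeff k p.1 ⊗ₜ[ℤ] zPowCoeff (k + p.1) p.2 := by
  induction k generalizing s with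
  | zero => simpa [zPowCoeff_zero] using deltaBFK_Zc s
  | succ k ih =>
    calc deltaBFK (zPowCoeff (k + 1) s)
        = ∑ p ∈ antidiagonal s, ∑ q ∈ antidiagonal p.1, ∑ r ∈ antidiagonal p.2,
            (Zc q.1 * zPowCoeff k r.1) ⊗ₜ[ℤ] (zPowCoeff q.1 q.2 * zPowCoeff (k + r.1) r.2) := by
          rw [zPowCoeff_succ, map_sum]
          refine sum_congr rfl fun p _ => ?_
          rw [map_mul, deltaBFK_Zc, ih, sum_mul_sum]
          exact sum_congr rfl fun q _ => sum_congr rfl fun r _ =>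
            Algebra.TensorProduct.tmul_mul_tmul _ _ _ _
      _ = ∑ p ∈ antidiagonal s, ∑ q ∈ antidiagonal p.1, ∑ r ∈ antidiagonal p.2,
            (Zc q.1 * zPowCoeff k q.2) ⊗ₜ[ℤ] (zPowCoeff q.1 r.1 * zPowCoeff (k + q.2) r.2) :=
          sum_antidiagonal_add_add_add_comm s fun a b c d =>
            (Zc a * zPowCoeff k c) ⊗ₜ[ℤ] (zPowCoeff a b * zPowCoeff (k + c) d)
      _ = _ := by
          refine sum_congr rfl fun p _ => ?_
          rw [zPowCoeff_succ, TensorProduct.sum_tmul]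
          refine sum_congr rfl fun q hq => ?_
          rw [← HasAntidiagonal.mem_antidiagonal.mp hq,
            show k + 1 + (q.1 + q.2) = q.1 + (k + q.2) + 1 by omega, zPowCoeff_add,
            TensorProduct.tmul_sum]

theorem deltaBFK_coassoc_Zc (n : ℕ) :
    Algebra.TensorProduct.assoc ℤ ℤ ℤ NSym NSym NSym
        (Algebra.TensorProduct.map deltaBFK (AlgHom.id ℤ NSym) (deltaBFK (Zc n))) =
      Algebra.TensorProduct.map (AlgHom.id ℤ NSym) deltaBFK (deltaBFK (Zc n)) := by
  simp only [deltaBFK_Zc, map_sum, Algebra.TensorProduct.map_tmul, AlgHom.id_apply,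
    TensorProduct.sum_tmul, TensorProduct.tmul_sum, Algebra.TensorProduct.assoc_tmul,
    deltaBFK_zPowCoeff]
  refine Eq.trans ?_ (sum_antidiagonal_add_assoc n fun i j l =>
    Zc i ⊗ₜ[ℤ] (zPowCoeff i j ⊗ₜ[ℤ] zPowCoeff (i + j) l))
  refine sum_congr rfl fun p _ => sum_congr rfl fun q hq => ?_
  rw [HasAntidiagonal.mem_antidiagonal.mp hq]
  -- the two sides differ only in how the `Module ℤ NSym` instance is written
  rfl

/-- The comultiplication `Δ` on `NSym` defined by
`Δ(Z(t)) = res_{u=0} Z(u) ⊗ (u - Z(t))⁻¹` is coassociative. -/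
theorem deltaBFK_coassoc (a : NSym) :
    (Algebra.TensorProduct.assoc ℤ ℤ ℤ NSym NSym NSym)
        ((Algebra.TensorProduct.map deltaBFK (AlgHom.id ℤ NSym)) (deltaBFK a)) =
      (Algebra.TensorProduct.map (AlgHom.id ℤ NSym) deltaBFK) (deltaBFK a) := by
  have key : (Algebra.TensorProduct.assoc ℤ ℤ ℤ NSym NSym NSym).toAlgHom.comp
        ((Algebra.TensorProduct.map deltaBFK (AlgHom.id ℤ NSym)).comp deltaBFK) =
      (Algebra.TensorProduct.map (AlgHom.id ℤ NSym) deltaBFK).comp deltaBFK := by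
    refine FreeAlgebra.hom_ext (funext fun n => ?_)
    have hZ : FreeAlgebra.ι ℤ n = Zc n := by rw [Zc, dif_pos n.2]
    simpa only [Function.comp_apply, AlgHom.comp_apply, AlgEquiv.coe_toAlgHom, hZ] using
      deltaBFK_coassoc_Zc n
  exact AlgHom.congr_fun key a
end

section
/- Over the rationals, NSym ⊗ ℚ is a free associative algebra, and its graded dual (QSym ⊗ ℚ) is a free commutative algebra (polynomial algebra) on the Lyndon words; in particular the graded dual pairing ⟨Z_{m_1}⋯Z_{m_r}, M_{(n_1,…,n_s)}⟩ = δ (equal compositions) is a perfect pairing of free abelian groups in each degree. -/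
open scoped Classical

/-- The monomial quasisymmetric function `M_α` as a formal power series in countably
many commuting variables. -/
def Mqs (α : List ℕ) : MvPowerSeries ℕ ℤ := fun d =>
  if (d.support.sort (· ≤ ·)).map d = α then 1 else 0

/-- The product `Z_{m_1} ⋯ Z_{m_r}` in `NSym = ℤ⟨Z_1, Z_2, …⟩` (realized inside the
free associative `ℤ`-algebra on generators indexed by `ℕ`). -/
noncomputable def Zprod (c : List ℕ) : FreeAlgebra ℤ ℕ :=
  (c.map (FreeAlgebra.ι ℤ)).prod

/-- The degree-`m` component of `NSym`: the span of products of generators over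
compositions of `m`. -/
noncomputable def NSymComp (m : ℕ) : Submodule ℤ (FreeAlgebra ℤ ℕ) :=
  Submodule.span ℤ (Set.range fun c : Composition m => Zprod c.blocks)

/-- The degree-`m` component of `QSym`: the span of the monomial quasisymmetric
functions over compositions of `m`. -/
def QSymComp (m : ℕ) : Submodule ℤ (MvPowerSeries ℕ ℤ) :=
  Submodule.span ℤ (Set.range fun c : Composition m => Mqs c.blocks)

/-! Both spanning families are linearly independent: the products `Z_α` are distinct words,
i.e. distinct elements of the free-monoid basis of the free algebra, and `M_β` has coefficient
`δ_{αβ}` at the monomial `x₀^{α₀} x₁^{α₁} ⋯`. So they are bases of the degree-`m` components, and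
the pairing is the isomorphism carrying the basis `Z_α` to the dual basis of `M_α`. -/

lemma List.toFinsupp_support_of_pos {α : List ℕ} (hα : ∀ x ∈ α, 0 < x) :
    α.toFinsupp.support = Finset.range α.length := by
  rw [List.toFinsupp_support, Finset.filter_true_of_mem]
  intro i hi
  rw [List.getD_eq_getElem _ _ (Finset.mem_range.mp hi)]
  exact (hα _ (List.getElem_mem _)).ne'

lemma coeff_toFinsupp_Mqs {α : List ℕ} (hα : ∀ x ∈ α, 0 < x) (β : List ℕ) :
    MvPowerSeries.coeff α.toFinsupp (Mqs β) = if α = β then 1 else 0 := by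
  have hsort : (α.toFinsupp.support.sort (· ≤ ·)).map α.toFinsupp = α := by
    rw [List.toFinsupp_support_of_pos hα, Finset.sort_range]
    exact List.ext_getElem (by simp) fun i _ hi => by simp [List.getElem?_eq_getElem hi]
  rw [MvPowerSeries.coeff_apply, Mqs, hsort]

lemma linearIndependent_Mqs {ι : Type*} {f : ι → List ℕ} (hf : Function.Injective f)
    (hpos : ∀ i, ∀ x ∈ f i, 0 < x) : LinearIndependent ℤ fun i => Mqs (f i) :=
  .of_pairwise_dual_eq_zero_one _ (fun i => MvPowerSeries.coeff (f i).toFinsupp)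
    (fun i j hij => (coeff_toFinsupp_Mqs (hpos i) (f j)).trans (if_neg (hf.ne hij)))
    (fun i => (coeff_toFinsupp_Mqs (hpos i) (f i)).trans (if_pos rfl))

lemma basisFreeMonoid_ofList (c : List ℕ) :
    FreeAlgebra.basisFreeMonoid ℤ ℕ (FreeMonoid.ofList c) = Zprod c := by
  simp only [FreeAlgebra.basisFreeMonoid, FreeAlgebra.equivMonoidAlgebraFreeMonoid,
    Module.Basis.map_apply, Finsupp.coe_basisSingleOne, LinearEquiv.trans_symm,
    LinearEquiv.trans_apply, MonoidAlgebra.coeffLinearEquiv_symm_apply,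
    MonoidAlgebra.ofCoeff_single, AlgEquiv.coe_symm_toLinearEquiv, AlgEquiv.ofAlgHom_symm_apply,
    MonoidAlgebra.lift_single, FreeMonoid.lift_ofList, Zprod]
  exact one_smul ℤ _

lemma linearIndependent_Zprod {ι : Type*} {f : ι → List ℕ} (hf : Function.Injective f) :
    LinearIndependent ℤ fun i => Zprod (f i) := by
  have := (FreeAlgebra.basisFreeMonoid ℤ ℕ).linearIndependent.comp _
    (FreeMonoid.ofList.injective.comp hf)
  simp only [Function.comp_def, basisFreeMonoid_ofList] at this
  exact this

lemma Composition.blocks_injective (m : ℕ) :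
    Function.Injective (Composition.blocks : Composition m → List ℕ) :=
  fun _ _ => Composition.ext

/-- In each degree `m`, the pairing `⟨Z_{m_1}⋯Z_{m_r}, M_{(n_1,…,n_s)}⟩ = δ` of the
degree-`m` components of `NSym` and `QSym` is a perfect pairing of free abelian groups
of the same finite rank, with dual bases indexed by compositions of `m`. -/
theorem nsym_qsym_perfect_pairing (m : ℕ) :
    ∃ (bN : Module.Basis (Composition m) ℤ (NSymComp m))
      (bQ : Module.Basis (Composition m) ℤ (QSymComp m))
      (B : NSymComp m →ₗ[ℤ] QSymComp m →ₗ[ℤ] ℤ),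
      (∀ c, (bN c : FreeAlgebra ℤ ℕ) = Zprod c.blocks) ∧
      (∀ c, (bQ c : MvPowerSeries ℕ ℤ) = Mqs c.blocks) ∧
      (∀ c c', B (bN c) (bQ c') = if c = c' then 1 else 0) ∧
      Function.Bijective (B : NSymComp m → Module.Dual ℤ (QSymComp m)) := by
  let bN : Module.Basis (Composition m) ℤ (NSymComp m) :=
    .span (linearIndependent_Zprod (Composition.blocks_injective m))
  let bQ : Module.Basis (Composition m) ℤ (QSymComp m) :=
    .span (linearIndependent_Mqs (Composition.blocks_injective m) fun c _ => c.blocks_pos)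
  let e := bN.equiv bQ.dualBasis (Equiv.refl _)
  refine ⟨bN, bQ, e, Module.Basis.coe_span_apply _, Module.Basis.coe_span_apply _,
    fun c c' => ?_, e.bijective⟩
  rw [LinearEquiv.coe_coe, Module.Basis.equiv_apply, Equiv.refl_apply,
    Module.Basis.dualBasis_apply_self]
  exact if_congr eq_comm rfl rfl
end
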